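/- arXiv:1201.4450 — 4 statements merged into one kernel-verified Lean document; each statement's English description precedes it below -/
import Mathlib

section
/- Every composition η of length n can be obtained from the all-zero composition (0,…,0) by applying a finite sequence of operators, each being either a switching operator s_i (1 ≤ i ≤ n−1) or the raising operator Φ. -/
open Finset

/-- The raising operator `Φ` on compositions: `Φ(η₁,…,η_n) = (η₂,…,η_n,η₁+1)`. -/
def raiseOp {n : ℕ} (η : Fin n → ℕ) : Fin n → ℕ :=
  fun i => if h : (i : ℕ) + 1 < n then η ⟨(i : ℕ) + 1, h⟩ else η ⟨0, i.pos⟩ + 1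

/-- The switching operator swapping the (0-indexed) components `j` and `j+1`. -/
def swapOp {n : ℕ} (j : ℕ) (η : Fin n → ℕ) : Fin n → ℕ :=
  fun i =>
    if h : (i : ℕ) = j ∧ j + 1 < n then η ⟨j + 1, h.2⟩
    else if h' : (i : ℕ) = j + 1 then η ⟨j, by omega⟩
    else η i

/-- One step of a generation sequence: the code `0` stands for the raising
operator `Φ`, and a code `c` with `1 ≤ c ≤ n-1` stands for the switching
operator `s_c` (swapping the 1-indexed components `c` and `c+1`). -/
def stepOp {n : ℕ} (c : ℕ) (η : Fin n → ℕ) : Fin n → ℕ :=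
  if c = 0 then raiseOp η else swapOp (c - 1) η

/-- A measure on compositions that decreases when peeling off an operator. -/
def meas {n : ℕ} (η : Fin n → ℕ) : ℕ :=
  n * n * (∑ i, η i) + ∑ i, (if η i = 0 then 0 else n - 1 - (i : ℕ))

lemma swapOp_apply {n : ℕ} (j : ℕ) (η : Fin n → ℕ) (i : Fin n) :
    swapOp j η i = if h : (i : ℕ) = j ∧ j + 1 < n then η ⟨j + 1, h.2⟩
      else if h' : (i : ℕ) = j + 1 then η ⟨j, by omega⟩ else η i := rfl

lemma sum_split {n : ℕ} {a b : Fin n} (hab : a ≠ b) (f : Fin n → ℕ) :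
    ∑ i, f i = f a + (f b + ∑ i ∈ (univ.erase a).erase b, f i) := by
  rw [Finset.add_sum_erase _ f (Finset.mem_erase.2 ⟨hab.symm, Finset.mem_univ b⟩),
    Finset.add_sum_erase _ f (Finset.mem_univ a)]

/-- Every composition `η` of length `n` can be obtained from `(0,…,0)` by
applying a finite sequence of switching operators `s_i` (`1 ≤ i ≤ n-1`)
and raising operators `Φ`. -/
theorem composition_reachable (n : ℕ) (η : Fin n → ℕ) :
    ∃ L : List ℕ, (∀ c ∈ L, c ≤ n - 1) ∧ L.foldr stepOp (fun _ => 0) = η := by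
  suffices H : ∀ (N : ℕ) (η : Fin n → ℕ), meas η ≤ N →
      ∃ L : List ℕ, (∀ c ∈ L, c ≤ n - 1) ∧ L.foldr stepOp (fun _ => 0) = η by
    exact H (meas η) η le_rfl
  intro N
  induction N with
  | zero =>
      intro η hm
      refine ⟨[], by simp, ?_⟩
      funext i
      have hn : 0 < n := i.pos
      simp only [meas] at hm
      have h1 : n * n * (∑ k, η k) = 0 :=
        Nat.eq_zero_of_add_eq_zero_right (Nat.le_zero.mp hm)
      have hS : ∑ k, η k = 0 := by
        rcases Nat.mul_eq_zero.mp h1 with h | h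
        · exact absurd h (by positivity)
        · exact h
      have := (Finset.sum_eq_zero_iff.mp hS) i (Finset.mem_univ i)
      simp only [List.foldr_nil]
      exact this.symm
  | succ N ih =>
      intro η hm
      by_cases h0 : ∀ i, η i = 0
      · exact ⟨[], by simp, (funext h0).symm⟩
      push_neg at h0
      obtain ⟨i0, hi0⟩ := h0
      have hn : 0 < n := i0.pos
      set T : Finset (Fin n) := univ.filter (fun i => η i ≠ 0) with hT
      have hTne : T.Nonempty := ⟨i0, by simp [hT, hi0]⟩
      set j := T.max' hTne with hj
      have hjpos : η j ≠ 0 := by have := T.max'_mem hTne; simpa [hT] using this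
      have hmax : ∀ i : Fin n, j < i → η i = 0 := by
        intro i hi
        by_contra hne
        have : i ∈ T := by simp [hT, hne]
        exact absurd (T.le_max' i this) (not_le.mpr hi)
      by_cases hc : (j : ℕ) + 1 < n
      · -- swap case: the last positive entry is not in the last position
        set j' : Fin n := ⟨(j : ℕ) + 1, hc⟩ with hj'
        have hjj' : j < j' := by simp [hj', Fin.lt_def]
        have hj'0 : η j' = 0 := hmax j' hjj'
        have hne : j ≠ j' := ne_of_lt hjj'
        set τ := swapOp (j : ℕ) η with hτ
        have hj'v : (j' : ℕ) = (j : ℕ) + 1 := rfl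
        have hτj : τ j = η j' := by
          rw [hτ, swapOp_apply, dif_pos ⟨rfl, hc⟩]
        have hτj' : τ j' = η j := by
          rw [hτ, swapOp_apply, dif_neg (by rw [hj'v]; omega), dif_pos hj'v]
        have hτo : ∀ i : Fin n, i ≠ j → i ≠ j' → τ i = η i := by
          intro i h1 h2
          have h1' : (i : ℕ) ≠ (j : ℕ) := fun h => h1 (Fin.ext h)
          have h2' : (i : ℕ) ≠ (j : ℕ) + 1 := fun h => h2 (Fin.ext (h.trans hj'v.symm))
          rw [hτ, swapOp_apply, dif_neg (by tauto), dif_neg h2']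
        have hηs : swapOp (j : ℕ) τ = η := by
          funext i
          by_cases e1 : i = j
          · subst e1
            rw [swapOp_apply, dif_pos ⟨rfl, hc⟩]
            exact hτj'
          · by_cases e2 : i = j'
            · subst e2
              rw [swapOp_apply, dif_neg (by rw [hj'v]; omega), dif_pos hj'v]
              have heq : (⟨(j : ℕ), by omega⟩ : Fin n) = j := Fin.ext rfl
              rw [heq, hτj]
            · have h1' : (i : ℕ) ≠ (j : ℕ) := fun h => e1 (Fin.ext h)
              have h2' : (i : ℕ) ≠ (j : ℕ) + 1 := fun h => e2 (Fin.ext (h.trans hj'v.symm))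
              rw [swapOp_apply, dif_neg (by tauto), dif_neg h2']
              exact hτo i e1 e2
        have hrest : ∑ i ∈ (univ.erase j).erase j', τ i = ∑ i ∈ (univ.erase j).erase j', η i :=
          Finset.sum_congr rfl (fun i hi => by
            simp only [Finset.mem_erase] at hi
            exact hτo i hi.2.1 hi.1)
        have hSum : ∑ k, τ k = ∑ k, η k := by
          rw [sum_split hne τ, sum_split hne η, hτj, hτj', hrest]
          omega
        have hrestI : ∑ i ∈ (univ.erase j).erase j', (if τ i = 0 then 0 else n - 1 - (i : ℕ))
            = ∑ i ∈ (univ.erase j).erase j', (if η i = 0 then 0 else n - 1 - (i : ℕ)) :=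
          Finset.sum_congr rfl (fun i hi => by
            simp only [Finset.mem_erase] at hi
            rw [hτo i hi.2.1 hi.1])
        have hI : (∑ k, if τ k = 0 then 0 else n - 1 - (k : ℕ)) + 1
            = ∑ k, if η k = 0 then 0 else n - 1 - (k : ℕ) := by
          rw [sum_split hne (fun k => if τ k = 0 then 0 else n - 1 - (k : ℕ)),
            sum_split hne (fun k => if η k = 0 then 0 else n - 1 - (k : ℕ))]
          rw [hrestI]
          rw [hτj, hτj', if_pos hj'0, if_neg hjpos, if_neg hjpos, if_pos hj'0]
          omega
        have hmeasτ : meas τ < meas η := by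
          simp only [meas]
          rw [hSum]
          exact Nat.add_lt_add_left (by omega) _
        have hmN : meas τ ≤ N := Nat.lt_succ_iff.mp (lt_of_lt_of_le hmeasτ hm)
        obtain ⟨L, hL, hfold⟩ := ih τ hmN
        refine ⟨((j : ℕ) + 1) :: L, ?_, ?_⟩
        · intro c hcm
          rcases List.mem_cons.mp hcm with h | h
          · subst h; omega
          · exact hL c h
        · simp only [List.foldr_cons, hfold]
          simp only [stepOp, if_neg (by omega : ¬ (j : ℕ) + 1 = 0), Nat.add_sub_cancel]
          exact hηs
      · -- raise case: the last entry is positive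
        have hjn : (j : ℕ) + 1 = n := by have := j.isLt; omega
        set η' : Fin n → ℕ := fun i =>
          if (i : ℕ) = 0 then η j - 1 else η ⟨(i : ℕ) - 1, by have := i.isLt; omega⟩ with hη'
        have hraise : raiseOp η' = η := by
          funext i
          simp only [raiseOp]
          split_ifs with h
          · have hv : η' ⟨(i : ℕ) + 1, h⟩ = η ⟨(i : ℕ) + 1 - 1, by omega⟩ := by
              simp [hη']
            rw [hv]
            exact congrArg η (Fin.ext (by simp))
          · have hij : i = j := Fin.ext (by have := i.isLt; omega)
            have hv : η' ⟨0, i.pos⟩ = η j - 1 := by simp [hη']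
            rw [hv, hij]
            omega
        have hS : (∑ k, η' k) + 1 = ∑ k, η k := by
          set σ : Fin n → Fin n :=
            fun i => if h : (i : ℕ) + 1 < n then ⟨(i : ℕ) + 1, h⟩ else ⟨0, i.pos⟩ with hσ
          have hbij : Function.Bijective σ := by
            apply Finite.injective_iff_bijective.mp
            intro a b hab
            apply Fin.ext
            have ha := a.isLt; have hb := b.isLt
            simp only [hσ] at hab
            split_ifs at hab with h1 h2 h2 <;> simp only [Fin.mk.injEq] at hab <;> omega
          have hcomp : ∑ k, η' (σ k) = ∑ k, η' k :=
            Fintype.sum_bijective σ hbij _ _ (fun x => rfl)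
          have hval : ∀ k : Fin n, k ≠ j → η' (σ k) = η k := by
            intro k hk
            have hk'' : (k : ℕ) ≠ (j : ℕ) := fun h => hk (Fin.ext h)
            have hk' : (k : ℕ) + 1 < n := by have := k.isLt; omega
            have hσk : σ k = ⟨(k : ℕ) + 1, hk'⟩ := by rw [hσ]; exact dif_pos hk'
            rw [hσk]
            have hv : η' ⟨(k : ℕ) + 1, hk'⟩ = η ⟨(k : ℕ) + 1 - 1, by omega⟩ := by
              simp [hη']
            rw [hv]
            exact congrArg η (Fin.ext (by simp))
          have hvj : η' (σ j) = η j - 1 := by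
            have hσj : σ j = ⟨0, j.pos⟩ := by rw [hσ]; exact dif_neg (by omega)
            rw [hσj]
            simp [hη']
          have e1 : ∑ k, η' (σ k) = η' (σ j) + ∑ k ∈ univ.erase j, η' (σ k) :=
            (Finset.add_sum_erase _ _ (Finset.mem_univ j)).symm
          have e2 : ∑ k, η k = η j + ∑ k ∈ univ.erase j, η k :=
            (Finset.add_sum_erase _ _ (Finset.mem_univ j)).symm
          have e3 : ∑ k ∈ univ.erase j, η' (σ k) = ∑ k ∈ univ.erase j, η k :=
            Finset.sum_congr rfl (fun k hk => hval k (Finset.mem_erase.mp hk).1)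
          rw [← hcomp, e1, e2, e3, hvj]
          omega
        have hind : (∑ k, if η' k = 0 then 0 else n - 1 - (k : ℕ)) < n * n := by
          calc (∑ k, if η' k = 0 then 0 else n - 1 - (k : ℕ))
              ≤ ∑ _k : Fin n, (n - 1) :=
                Finset.sum_le_sum (fun k _ => by split_ifs <;> omega)
            _ = n * (n - 1) := by
                simp [Finset.sum_const, Finset.card_univ, mul_comm]
            _ < n * n := mul_lt_mul_of_pos_left (by omega) hn
        have h1 : meas η' < n * n * ((∑ k, η' k) + 1) := by
          calc meas η' = n * n * (∑ k, η' k)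
                + (∑ k, if η' k = 0 then 0 else n - 1 - (k : ℕ)) := rfl
            _ < n * n * (∑ k, η' k) + n * n := Nat.add_lt_add_left hind _
            _ = n * n * ((∑ k, η' k) + 1) := by ring
        rw [hS] at h1
        have h2 : n * n * (∑ k, η k) ≤ meas η := Nat.le_add_right _ _
        have h3 : meas η' < meas η := lt_of_lt_of_le h1 h2
        have hmN : meas η' ≤ N := Nat.lt_succ_iff.mp (lt_of_lt_of_le h3 hm)
        obtain ⟨L, hL, hfold⟩ := ih η' hmN
        refine ⟨0 :: L, ?_, ?_⟩
        · intro c hcm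
          rcases List.mem_cons.mp hcm with h | h
          · subst h; omega
          · exact hL c h
        · simp only [List.foldr_cons, hfold, stepOp, if_pos rfl]
          exact hraise
end

section
/- The Demazure–Lustig operators satisfy the braid relation T_i T_{i+1} T_i = T_{i+1} T_i T_{i+1} for 1 ≤ i ≤ n−2, as operators on polynomials in z₁,…,z_n over ℚ(t). -/
/-!
Pass to the fraction field `K` of the polynomial ring. There the variable swaps `s₁ = (a b)` and
`s₂ = (b c)` act by field automorphisms and `T_i = t + L_i (s_i - 1)` with `L_i ∈ K`, and the
polynomial operators are the restrictions of these, because `x_a - x_b` is invertible in `K`.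
Using `s_i² = 1` and `s₁ s₂ s₁ = s₂ s₁ s₂`, both `T₁ T₂ T₁` and `T₂ T₁ T₂` expand as `K`-linear
combinations of the six elements of `⟨s₁, s₂⟩ ≅ S₃`, and their coefficients agree as rational
functions.
-/

open MvPolynomial

/-- The parameter `t`, a transcendental element of the field `ℚ(t)`. -/
noncomputable def tp : RatFunc ℚ := RatFunc.X

/-- Swap two variables in a polynomial. -/
noncomputable def swapVars {m : ℕ} (a b : Fin m)
    (f : MvPolynomial (Fin m) (RatFunc ℚ)) : MvPolynomial (Fin m) (RatFunc ℚ) :=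
  rename (Equiv.swap a b) f

namespace MvPolynomial

variable {σ R : Type*} [CommRing R]

local notation "K" => FractionRing (MvPolynomial σ R)

local notation "ι" => algebraMap (MvPolynomial σ R) (FractionRing (MvPolynomial σ R))

noncomputable def renameRingEquivHom :
    Equiv.Perm σ →* (MvPolynomial σ R ≃+* MvPolynomial σ R) where
  toFun π := (renameEquiv R π).toRingEquiv
  map_one' := RingEquiv.ext rename_id_apply
  map_mul' π ρ := RingEquiv.ext fun p => (rename_rename (R := R) ρ π p).symm

noncomputable def renameFrac : Equiv.Perm σ →* (K ≃+* K) :=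
  (IsFractionRing.ringEquivOfRingEquivHom (MvPolynomial σ R) K).comp renameRingEquivHom

@[simp]
theorem renameFrac_algebraMap (π : Equiv.Perm σ) (p : MvPolynomial σ R) :
    renameFrac π (ι p) = ι (rename π p) :=
  IsFractionRing.ringEquivOfRingEquiv_algebraMap (renameRingEquivHom π) p

theorem renameFrac_renameFrac (π ρ : Equiv.Perm σ) (g : K) :
    renameFrac π (renameFrac ρ g) = renameFrac (π * ρ) g := by
  rw [map_mul]
  rfl

section Swap

variable [DecidableEq σ]

@[simp]
theorem renameFrac_swap_renameFrac_swap (a b : σ) (g : K) :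
    renameFrac (Equiv.swap a b) (renameFrac (Equiv.swap a b) g) = g := by
  rw [renameFrac_renameFrac, Equiv.swap_mul_self, map_one]
  rfl

theorem renameFrac_swap_braid {a b c : σ} (hab : a ≠ b) (hbc : b ≠ c) (hac : a ≠ c) (g : K) :
    renameFrac (Equiv.swap a b) (renameFrac (Equiv.swap b c) (renameFrac (Equiv.swap a b) g)) =
      renameFrac (Equiv.swap b c) (renameFrac (Equiv.swap a b) (renameFrac (Equiv.swap b c) g)) := by
  have h₁ := Equiv.swap_apply_apply (Equiv.swap a b) b c
  have h₂ := Equiv.swap_apply_apply (Equiv.swap b c) a b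
  rw [Equiv.swap_apply_right, Equiv.swap_apply_of_ne_of_ne hac.symm hbc.symm, Equiv.swap_inv] at h₁
  rw [Equiv.swap_apply_left, Equiv.swap_apply_of_ne_of_ne hab hac, Equiv.swap_inv] at h₂
  rw [renameFrac_renameFrac, renameFrac_renameFrac, renameFrac_renameFrac, renameFrac_renameFrac,
    ← h₁, ← h₂]

/-- The defining identity of `T = t + ((t x_a - x_b)/(x_a - x_b)) (s_{ab} - 1)`, cleared of
denominators. -/
def IsDemazureLustig (t : R) (a b : σ) (T : MvPolynomial σ R → MvPolynomial σ R) : Prop :=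
  ∀ f, (X a - X b) * T f =
    C t * (X a - X b) * f + (C t * X a - X b) * (rename (Equiv.swap a b) f - f)

end Swap

variable [IsDomain R] (t : R)

theorem algebraMap_X_sub_X_ne_zero {a b : σ} (hab : a ≠ b) :
    ι (X a) - ι (X b) ≠ 0 := by
  rw [← map_sub, map_ne_zero_iff _ (IsFractionRing.injective _ _)]
  exact sub_ne_zero.mpr (X_injective.ne hab)

noncomputable def demazureLustigCoeff (a b : σ) : K :=
  ι (C t * X a - X b) / ι (X a - X b)

@[simp]
theorem renameFrac_demazureLustigCoeff (π : Equiv.Perm σ) (a b : σ) :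
    renameFrac π (demazureLustigCoeff t a b) = demazureLustigCoeff t (π a) (π b) := by
  simp [demazureLustigCoeff, map_div₀]

variable [DecidableEq σ]

noncomputable def demazureLustig (a b : σ) (g : K) : K :=
  ι (C t) * g + demazureLustigCoeff t a b * (renameFrac (Equiv.swap a b) g - g)

theorem demazureLustig_braid {a b c : σ} (hab : a ≠ b) (hbc : b ≠ c) (hac : a ≠ c) (g : K) :
    demazureLustig t a b (demazureLustig t b c (demazureLustig t a b g)) =
      demazureLustig t b c (demazureLustig t a b (demazureLustig t b c g)) := by
  simp only [demazureLustig, map_add, map_mul, map_sub, renameFrac_algebraMap, rename_C,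
    renameFrac_demazureLustigCoeff, Equiv.swap_apply_left, Equiv.swap_apply_right,
    Equiv.swap_apply_of_ne_of_ne hac.symm hbc.symm, Equiv.swap_apply_of_ne_of_ne hab hac,
    renameFrac_swap_renameFrac_swap]
  rw [renameFrac_swap_braid hab hbc hac]
  have := algebraMap_X_sub_X_ne_zero (R := R) hab
  have := algebraMap_X_sub_X_ne_zero (R := R) hab.symm
  have := algebraMap_X_sub_X_ne_zero (R := R) hbc
  have := algebraMap_X_sub_X_ne_zero (R := R) hbc.symm
  have := algebraMap_X_sub_X_ne_zero (R := R) hac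
  have := algebraMap_X_sub_X_ne_zero (R := R) hac.symm
  simp only [demazureLustigCoeff, map_sub, map_mul]
  field_simp
  ring

variable {t}

theorem IsDemazureLustig.algebraMap_apply {a b : σ} {T : MvPolynomial σ R → MvPolynomial σ R}
    (hT : IsDemazureLustig t a b T) (hab : a ≠ b) (f : MvPolynomial σ R) :
    ι (T f) = demazureLustig t a b (ι f) := by
  have hD := algebraMap_X_sub_X_ne_zero (R := R) hab
  have h := congrArg ι (hT f)
  simp only [map_mul, map_add, map_sub] at h
  simp only [demazureLustig, demazureLustigCoeff, renameFrac_algebraMap, map_sub, map_mul]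
  field_simp
  linear_combination h

theorem IsDemazureLustig.braid {a b c : σ} {T S : MvPolynomial σ R → MvPolynomial σ R}
    (hT : IsDemazureLustig t a b T) (hS : IsDemazureLustig t b c S)
    (hab : a ≠ b) (hbc : b ≠ c) (hac : a ≠ c) (f : MvPolynomial σ R) :
    T (S (T f)) = S (T (S f)) := by
  apply IsFractionRing.injective (MvPolynomial σ R) K
  simp only [hT.algebraMap_apply hab, hS.algebraMap_apply hbc]
  exact demazureLustig_braid t hab hbc hac _

end MvPolynomial

/-- The Demazure–Lustig operators satisfy the braid relation
`T_i T_{i+1} T_i = T_{i+1} T_i T_{i+1}`.  Here `T` is the operator `T_i`,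
acting on the adjacent variable pair `(z_i, z_{i+1})`, and `S` is `T_{i+1}`,
acting on `(z_{i+1}, z_{i+2})`; each is characterised by the (division-cleared)
defining identity of `T_j = t + ((t z_j − z_{j+1})/(z_j − z_{j+1}))(s_j − 1)`. -/
theorem demazure_lustig_braid (n : ℕ) (i : Fin n)
    (T S : MvPolynomial (Fin (n + 2)) (RatFunc ℚ) → MvPolynomial (Fin (n + 2)) (RatFunc ℚ))
    (hT : ∀ f, (X i.castSucc.castSucc - X i.castSucc.succ) * T f =
        C tp * (X i.castSucc.castSucc - X i.castSucc.succ) * f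
          + (C tp * X i.castSucc.castSucc - X i.castSucc.succ)
              * (swapVars i.castSucc.castSucc i.castSucc.succ f - f))
    (hS : ∀ f, (X i.castSucc.succ - X i.succ.succ) * S f =
        C tp * (X i.castSucc.succ - X i.succ.succ) * f
          + (C tp * X i.castSucc.succ - X i.succ.succ)
              * (swapVars i.castSucc.succ i.succ.succ f - f)) :
    ∀ f, T (S (T f)) = S (T (S f)) :=
  IsDemazureLustig.braid hT hS (by simp [Fin.ext_iff]) (by simp [Fin.ext_iff])
    (by simp [Fin.ext_iff]; omega)
end

section
/- For a composition η of length n, the map i ↦ l'_η(i) restricted to the positions of any fixed component value is injective; more strongly, the eigenvalues η̄_i := q^{η_i} t^{−l'_η(i)} are pairwise distinct for generic q, t (i.e., if η̄_i = η̄_j as monomials in q and t then i = j). -/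
/-- The co-leg length `l'_η(i) := #{j < i : η_j ≥ η_i} + #{j > i : η_j > η_i}`
of a composition `η` at position `i`. -/
def coleg {n : ℕ} (η : Fin n → ℕ) (i : Fin n) : ℕ :=
  (Finset.univ.filter fun j => j < i ∧ η i ≤ η j).card +
  (Finset.univ.filter fun j => i < j ∧ η i < η j).card

lemma coleg_strict_mono {n : ℕ} (η : Fin n → ℕ) (i j : Fin n)
    (hij : i < j) (hq : η i = η j) : coleg η i < coleg η j := by
  classical
  unfold coleg
  set A1 := Finset.univ.filter fun k : Fin n => k < i ∧ η i ≤ η k with hA1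
  set A3 := Finset.univ.filter fun k : Fin n => i < k ∧ k < j ∧ η i ≤ η k with hA3
  set A3' := Finset.univ.filter fun k : Fin n => i < k ∧ k < j ∧ η i < η k with hA3'
  set Bj := Finset.univ.filter fun k : Fin n => j < k ∧ η j < η k with hBj
  have h1 : (Finset.univ.filter fun k : Fin n => k < j ∧ η j ≤ η k)
      = (A1 ∪ {i}) ∪ A3 := by
    ext k
    simp only [hA1, hA3, Finset.mem_union, Finset.mem_filter, Finset.mem_univ,
      true_and, Finset.mem_singleton]
    constructor
    · rintro ⟨hkj, hk⟩
      rcases lt_trichotomy k i with h | h | h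
      · exact Or.inl (Or.inl ⟨h, hq ▸ hk⟩)
      · exact Or.inl (Or.inr h)
      · exact Or.inr ⟨h, hkj, hq ▸ hk⟩
    · rintro ((⟨hki, hk⟩ | hk) | ⟨_, hkj, hk⟩)
      · exact ⟨hki.trans hij, hq ▸ hk⟩
      · subst hk; exact ⟨hij, hq ▸ le_refl _⟩
      · exact ⟨hkj, hq ▸ hk⟩
  have h2 : (Finset.univ.filter fun k : Fin n => i < k ∧ η i < η k)
      = Bj ∪ A3' := by
    ext k
    simp only [hBj, hA3', Finset.mem_union, Finset.mem_filter, Finset.mem_univ,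
      true_and]
    constructor
    · rintro ⟨hik, hk⟩
      rcases lt_trichotomy k j with h | h | h
      · exact Or.inr ⟨hik, h, hk⟩
      · subst h; exact absurd hk (by simp [hq])
      · exact Or.inl ⟨h, hq ▸ hk⟩
    · rintro (⟨hjk, hk⟩ | ⟨hik, _, hk⟩)
      · exact ⟨hij.trans hjk, hq ▸ hk⟩
      · exact ⟨hik, hk⟩
  have d1 : Disjoint A1 ({i} : Finset (Fin n)) := by
    simp only [Finset.disjoint_singleton_right, hA1, Finset.mem_filter,
      Finset.mem_univ, true_and]
    rintro ⟨h, -⟩; exact absurd h (lt_irrefl i)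
  have d2 : Disjoint (A1 ∪ {i}) A3 := by
    rw [Finset.disjoint_left]
    intro k hk hk3
    simp only [hA1, hA3, Finset.mem_union, Finset.mem_filter, Finset.mem_univ,
      true_and, Finset.mem_singleton] at hk hk3
    rcases hk with ⟨h, _⟩ | rfl
    · exact absurd (h.trans hk3.1) (lt_irrefl k)
    · exact absurd hk3.1 (lt_irrefl k)
  have d3 : Disjoint Bj A3' := by
    rw [Finset.disjoint_left]
    intro k hk hk3
    simp only [hBj, hA3', Finset.mem_filter, Finset.mem_univ, true_and] at hk hk3
    exact absurd (hk.1.trans hk3.2.1) (lt_irrefl j)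
  have hsub : A3'.card ≤ A3.card := by
    apply Finset.card_le_card
    intro k hk
    simp only [hA3, hA3', Finset.mem_filter, Finset.mem_univ, true_and] at hk ⊢
    exact ⟨hk.1, hk.2.1, le_of_lt hk.2.2⟩
  rw [h1, h2, Finset.card_union_of_disjoint d2, Finset.card_union_of_disjoint d1,
    Finset.card_union_of_disjoint d3, Finset.card_singleton]
  omega

/-- The formal monomials `η̄_i = q^{η_i} t^{−l'_η(i)}` are pairwise distinct:
if the `q`-exponents and `t`-exponents agree (i.e. `η_i = η_j` and
`l'_η(i) = l'_η(j)`), then `i = j`.  In particular, on the positions carrying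
any fixed component value, `i ↦ l'_η(i)` is injective. -/
theorem eigenvalue_distinct (n : ℕ) (η : Fin n → ℕ) (i j : Fin n)
    (hq : η i = η j) (ht : coleg η i = coleg η j) : i = j := by
  rcases lt_trichotomy i j with h | h | h
  · exact absurd ht (Nat.ne_of_lt (coleg_strict_mono η i j h hq))
  · exact h
  · exact absurd ht.symm (Nat.ne_of_lt (coleg_strict_mono η j i h hq.symm))
end

section
/- For any composition η of length n, the sequence r_{η,max(η)} ⋯ r_{η,1} applied to (0,…,0) as in Proposition 2 produces (η⁺)^R, the reverse of the partition rearrangement of η. In particular, for each value v, the number of components of (η⁺)^R equal to v equals the number of components of η equal to v. -/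
/-- Raising operator on compositions written as lists: `Φ L = (L₂,…,L_n,L₁+1)`. -/
def raiseL (L : List ℕ) : List ℕ := L.tail ++ [L.headD 0 + 1]

/-- `s_j` on lists: swap the 1-indexed components `j` and `j+1`. -/
def swapL (j : ℕ) (L : List ℕ) : List ℕ :=
  (L.set (j - 1) (L.getD j 0)).set j (L.getD (j - 1) 0)

/-- Apply a word of switching operators, leftmost entry first. -/
def applyS (σ : List ℕ) (L : List ℕ) : List ℕ := σ.foldl (fun M j => swapL j M) L

/-- `l_{η,i} := #{j : η_j < i}`. -/
def lcount (η : List ℕ) (i : ℕ) : ℕ := η.countP (fun x => decide (x < i))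

/-- `g_{η,i} := #{j : η_j ≥ i}`. -/
def gcount (η : List ℕ) (i : ℕ) : ℕ := η.countP (fun x => decide (i ≤ x))

/-- The switching word `σ(η,i) = (l,…,1, l+1,…,2, …, l+g−1,…,g)` with
`l = l_{η,i-1}` and `g = g_{η,i}`, given as the concatenation of `g`
descending blocks of length `l`. -/
def sigmaWord (η : List ℕ) (i : ℕ) : List ℕ :=
  ((List.range (gcount η i)).map fun k =>
    (List.range (lcount η (i - 1))).map fun m => lcount η (i - 1) + k - m).flatten

/-- The operator `r_{η,i}`: `Φ^{g_{η,i}}` for `i = 1`, and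
`Φ^{g_{η,i}} s_{σ(η,i)}` for `i > 1`. -/
def rOp (η : List ℕ) (i : ℕ) (L : List ℕ) : List ℕ :=
  if i = 1 then raiseL^[gcount η i] L
  else raiseL^[gcount η i] (applyS (sigmaWord η i) L)

def applyAll (η : List ℕ) : List ℕ :=
  (List.range (η.foldr max 0)).foldl (fun L k => rOp η (k + 1) L) (List.replicate η.length 0)

lemma swapL_one (a x : ℕ) (R : List ℕ) : swapL 1 (a :: x :: R) = x :: a :: R := by
  simp [swapL]

lemma swapL_cons (j : ℕ) (p : ℕ) (L : List ℕ) :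
    swapL (j + 2) (p :: L) = p :: swapL (j + 1) L := by
  show _ = p :: ((L.set (j+1-1) (L.getD (j+1) 0)).set (j+1) (L.getD (j+1-1) 0))
  simp [swapL, List.getD, Nat.add_sub_cancel]

lemma swapL_append (P : List ℕ) (a x : ℕ) (R : List ℕ) :
    swapL (P.length + 1) (P ++ a :: x :: R) = P ++ x :: a :: R := by
  induction P with
  | nil => simpa using swapL_one a x R
  | cons p P ih =>
      simp only [List.length_cons, List.cons_append]
      rw [show P.length + 1 + 1 = P.length + 2 from rfl, swapL_cons, ih]

lemma applyS_append (σ τ L : List ℕ) : applyS (σ ++ τ) L = applyS τ (applyS σ L) := by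
  simp [applyS, List.foldl_append]

lemma applyS_block (k : ℕ) (P A : List ℕ) (x : ℕ) (R : List ℕ) (hP : P.length = k) :
    applyS ((List.range A.length).map fun m => A.length + k - m) (P ++ (A ++ x :: R))
      = P ++ x :: (A ++ R) := by
  induction A using List.reverseRecOn generalizing R with
  | nil => simp [applyS]
  | append_singleton A a ih =>
      rw [List.length_append, List.length_singleton, List.range_succ_eq_map]
      simp only [List.map_cons, List.map_map]
      have h1 : A.length + 1 + k - 0 = (P ++ A).length + 1 := by
        simp [hP]; omega
      rw [show (P ++ (A ++ [a] ++ x :: R)) = (P ++ A) ++ a :: x :: R by simp]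
      have : applyS ([A.length + 1 + k - 0] ++
          (List.range A.length).map ((fun m => A.length + 1 + k - m) ∘ (· + 1)))
          ((P ++ A) ++ a :: x :: R) = P ++ x :: (A ++ [a] ++ R) := by
        rw [applyS_append]
        have hsw : applyS [A.length + 1 + k - 0] ((P ++ A) ++ a :: x :: R)
            = (P ++ A) ++ x :: a :: R := by
          simp only [applyS, List.foldl_cons, List.foldl_nil]
          rw [h1, swapL_append]
        rw [hsw]
        have hmap : (List.range A.length).map ((fun m => A.length + 1 + k - m) ∘ (· + 1))
            = (List.range A.length).map (fun m => A.length + k - m) := by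
          apply List.map_congr_left; intro m _; simp [Function.comp]; omega
        rw [hmap, show (P ++ A) ++ x :: a :: R = P ++ (A ++ x :: (a :: R)) by simp]
        rw [ih (a :: R)]
        simp
      simpa using this

lemma applyS_blocks (g c : ℕ) (A : List ℕ) (x : ℕ) (hg : g ≤ c) :
    applyS (((List.range g).map fun k =>
        (List.range A.length).map fun m => A.length + k - m).flatten)
      (A ++ List.replicate c x)
      = List.replicate g x ++ (A ++ List.replicate (c - g) x) := by
  induction g with
  | zero => simp [applyS]
  | succ g ih =>
      rw [List.range_succ, List.map_append, List.flatten_append, applyS_append,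
        ih (by omega)]
      have hx : List.replicate (c - g) x = x :: List.replicate (c - (g+1)) x := by
        rw [show c - g = (c - (g+1)) + 1 by omega, List.replicate_succ]
      rw [hx]
      have := applyS_block g (List.replicate g x) A x (List.replicate (c - (g+1)) x)
        (by simp)
      simp only [List.map_singleton, List.flatten_singleton]
      rw [this]
      simp [List.replicate_succ' (n := g)]

lemma raiseL_iter (A B : List ℕ) : raiseL^[A.length] (A ++ B) = B ++ A.map (· + 1) := by
  induction A generalizing B with
  | nil => simp
  | cons a A ih =>
      rw [List.length_cons, Function.iterate_succ_apply]
      have h1 : raiseL ((a :: A) ++ B) = A ++ (B ++ [a + 1]) := by simp [raiseL]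
      rw [h1, ih]
      simp

lemma map_min_of_all_ge (S : List ℕ) (i : ℕ) (h : ∀ x ∈ S, i ≤ x) :
    S.map (fun x => min x i) = List.replicate S.length i := by
  induction S with
  | nil => simp
  | cons a S ih =>
      simp only [List.map_cons, List.length_cons, List.replicate_succ]
      rw [min_eq_right (h a (by simp)), ih (fun x hx => h x (by simp [hx]))]

lemma filter_lt_of_all_ge (S : List ℕ) (i : ℕ) (h : ∀ x ∈ S, i ≤ x) :
    S.filter (fun x => decide (x < i)) = [] := by
  rw [List.filter_eq_nil_iff]; intro x hx; simpa using Nat.not_lt.2 (h x hx)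

lemma countP_ge_of_all_ge (S : List ℕ) (i : ℕ) (h : ∀ x ∈ S, i ≤ x) :
    (S.countP fun x => decide (i ≤ x)) = S.length := by
  rw [List.countP_eq_length]; intro x hx; simpa using h x hx

lemma map_min_sorted (S : List ℕ) (hS : S.Pairwise (· ≤ ·)) (i : ℕ) :
    S.map (fun x => min x i)
      = S.filter (fun x => decide (x < i))
        ++ List.replicate (S.countP fun x => decide (i ≤ x)) i := by
  induction S with
  | nil => simp
  | cons a S ih =>
      have hS' : S.Pairwise (· ≤ ·) := hS.of_cons
      have hall : ∀ x ∈ S, a ≤ x := fun x hx => (List.pairwise_cons.1 hS).1 x hx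
      by_cases ha : a < i
      · rw [List.map_cons, min_eq_left (by omega), List.filter_cons_of_pos (by simpa),
          List.countP_cons_of_neg (by simp; omega), ih hS']
        simp
      · push_neg at ha
        have hge : ∀ x ∈ a :: S, i ≤ x := by
          intro x hx; rcases List.mem_cons.1 hx with h | h
          · omega
          · exact le_trans ha (hall x h)
        rw [map_min_of_all_ge _ _ hge, filter_lt_of_all_ge _ _ hge,
          countP_ge_of_all_ge _ _ hge]
        simp

lemma countP_split (S : List ℕ) (i : ℕ) :
    (S.countP fun x => decide (i ≤ x))
      = (S.countP fun x => decide (x = i)) + (S.countP fun x => decide (i + 1 ≤ x)) := by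
  induction S with
  | nil => simp
  | cons a S ih =>
      simp only [List.countP_cons, ih, decide_eq_true_eq]
      rcases Nat.lt_trichotomy a i with h | h | h
      · rw [if_neg (by omega), if_neg (by omega), if_neg (by omega)]; omega
      · subst h; rw [if_pos le_rfl, if_pos rfl, if_neg (by omega)]; omega
      · rw [if_pos (by omega), if_neg (by omega), if_pos (by omega)]; omega

lemma filter_eq_replicate (S : List ℕ) (i : ℕ) :
    S.filter (fun x => decide (x = i))
      = List.replicate (S.countP fun x => decide (x = i)) i := by
  rw [List.eq_replicate_iff]
  constructor
  · rw [List.countP_eq_length_filter]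
  · intro b hb
    have := List.of_mem_filter hb
    simpa using this

lemma filter_lt_succ_sorted (S : List ℕ) (hS : S.Pairwise (· ≤ ·)) (i : ℕ) :
    S.filter (fun x => decide (x < i + 1))
      = S.filter (fun x => decide (x < i)) ++ S.filter (fun x => decide (x = i)) := by
  induction S with
  | nil => simp
  | cons a S ih =>
      have hS' : S.Pairwise (· ≤ ·) := hS.of_cons
      have hall : ∀ x ∈ S, a ≤ x := fun x hx => (List.pairwise_cons.1 hS).1 x hx
      rcases Nat.lt_trichotomy a i with h | h | h
      · rw [List.filter_cons_of_pos (by simp; omega), List.filter_cons_of_pos (by simpa),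
          List.filter_cons_of_neg (by simp; omega), ih hS']
        simp
      · subst h
        rw [List.filter_cons_of_pos (by simp), List.filter_cons_of_neg (by simp),
          List.filter_cons_of_pos (by simp),
          filter_lt_of_all_ge S a hall]
        have : S.filter (fun x => decide (x < a + 1)) = S.filter (fun x => decide (x = a)) := by
          apply List.filter_congr
          intro x hx
          have := hall x hx
          simp; omega
        rw [this]; simp
      · have hge : ∀ x ∈ a :: S, i + 1 ≤ x := by
          intro x hx; rcases List.mem_cons.1 hx with hh | hh
          · omega
          · have := hall x hh; omega
        rw [filter_lt_of_all_ge _ _ hge,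
          filter_lt_of_all_ge _ _ (fun x hx => le_trans (by omega) (hge x hx))]
        have : (a :: S).filter (fun x => decide (x = i)) = [] := by
          rw [List.filter_eq_nil_iff]; intro x hx
          have := hge x hx; simp; omega
        rw [this]; simp


lemma rOp_eq (η : List ℕ) (i : ℕ) (L : List ℕ) :
    rOp η (i + 1) L = raiseL^[gcount η (i + 1)] (applyS (sigmaWord η (i + 1)) L) := by
  rcases Nat.eq_zero_or_pos i with h | h
  · subst h
    have hl : lcount η 0 = 0 := by simp [lcount]
    have : sigmaWord η 1 = [] := by simp [sigmaWord, hl]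
    simp [rOp, this, applyS]
  · rw [rOp, if_neg (by omega)]

lemma inv_eq (η : List ℕ) (i : ℕ) :
    (List.range i).foldl (fun L k => rOp η (k + 1) L) (List.replicate η.length 0)
      = (List.insertionSort (· ≤ ·) η).map (fun x => min x i) := by
  set S := List.insertionSort (· ≤ ·) η with hSdef
  have hperm : S.Perm η := List.perm_insertionSort _ η
  have hsort : S.Pairwise (· ≤ ·) := List.pairwise_insertionSort _ η
  induction i with
  | zero =>
      simp only [List.range_zero, List.foldl_nil]
      rw [show (fun x : ℕ => min x 0) = (fun _ : ℕ => 0) by funext x; omega,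
        List.map_const', hperm.length_eq]
  | succ i ih =>
      rw [List.range_succ, List.foldl_append, ih, List.foldl_cons, List.foldl_nil,
        rOp_eq]
      set T := S.filter (fun x => decide (x < i)) with hT
      set c := S.countP (fun x => decide (i ≤ x)) with hc
      set g := S.countP (fun x => decide (i + 1 ≤ x)) with hg
      have hgc : g ≤ c := by rw [hc, countP_split S i]; omega
      have hlc : lcount η (i + 1 - 1) = T.length := by
        rw [show i + 1 - 1 = i from rfl, lcount, ← hperm.countP_eq,
          hT, List.countP_eq_length_filter]
      have hgcnt : gcount η (i + 1) = g := by
        rw [gcount, ← hperm.countP_eq, hg]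
      have hσ : sigmaWord η (i + 1)
          = ((List.range g).map fun k =>
              (List.range T.length).map fun m => T.length + k - m).flatten := by
        rw [sigmaWord, hlc, hgcnt]
      have hiter : raiseL^[g] (List.replicate g i ++ (T ++ List.replicate (c - g) i))
          = (T ++ List.replicate (c - g) i) ++ List.replicate g (i + 1) := by
        have := raiseL_iter (List.replicate g i) (T ++ List.replicate (c - g) i)
        simpa [List.map_replicate] using this
      rw [map_min_sorted S hsort i, ← hT, ← hc, hσ, applyS_blocks g c T i hgc, hgcnt,
        hiter]
      rw [map_min_sorted S hsort (i + 1), filter_lt_succ_sorted S hsort i,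
        filter_eq_replicate, ← hT]
      have hcg : S.countP (fun x => decide (x = i)) = c - g := by
        rw [hc, countP_split S i]; omega
      rw [hcg, ← hg]

/-- First step of the recursive generation algorithm (Proposition 2.1 of the
paper): applying `r_{η,max(η)} ⋯ r_{η,1}` to `(0,…,0)` produces `(η⁺)^R`, the
nondecreasing rearrangement of `η` (the reverse of its partition
rearrangement).  In particular each value `v` occurs in the result exactly as
often as it occurs in `η`. -/
theorem rOp_generates_sorted (η : List ℕ) :
    (List.range (η.foldr max 0)).foldl (fun L k => rOp η (k + 1) L)
        (List.replicate η.length 0) = List.insertionSort (· ≤ ·) η ∧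
    ∀ v, ((List.range (η.foldr max 0)).foldl (fun L k => rOp η (k + 1) L)
        (List.replicate η.length 0)).count v = η.count v := by
  have hmax : ∀ x ∈ η, x ≤ η.foldr max 0 := by
    intro x hx
    induction η with
    | nil => simp at hx
    | cons a t ih =>
        rcases List.mem_cons.1 hx with h | h
        · subst h; exact le_max_left _ _
        · exact le_trans (ih h) (le_max_right _ _)
  have hperm := List.perm_insertionSort (· ≤ ·) η
  have hmain : (List.range (η.foldr max 0)).foldl (fun L k => rOp η (k + 1) L)
      (List.replicate η.length 0) = List.insertionSort (· ≤ ·) η := by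
    rw [inv_eq]
    have : ∀ x ∈ List.insertionSort (· ≤ ·) η,
        min x (η.foldr max 0) = id x := by
      intro x hx
      exact min_eq_left (hmax x (hperm.mem_iff.1 hx))
    rw [List.map_congr_left this, List.map_id]
  exact ⟨hmain, fun v => by rw [hmain]; exact hperm.count_eq v⟩
end
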